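/- arXiv:2201.09412 — 6 statements merged into one kernel-verified Lean document; each statement's English description precedes it below -/
import Mathlib

section
/- For a finite chain complex with exterior derivatives d_k and Dirac blocks D_k = d_k^* d_k, the k-th Hodge block L_k = d_k^* d_k + d_{k-1} d_{k-1}^* satisfies Det(L_k) = Det(D_k) · Det(D_{k-1}'), where D_{k-1}' = d_{k-1} d_{k-1}^* and Det denotes the pseudo determinant (product of nonzero eigenvalues). -/
open Matrix

/-- The pseudo determinant of a real square matrix: the product of its nonzero
eigenvalues, computed (for the diagonalizable/symmetric matrices considered here)
as `(-1)^rank` times the lowest-order nonzero coefficient of the characteristic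
polynomial.  For the zero matrix it equals `1`. -/
noncomputable def pseudoDet {V : Type*} [Fintype V] [DecidableEq V]
    (A : Matrix V V ℝ) : ℝ :=
  (-1 : ℝ) ^ A.rank * A.charpoly.coeff (Fintype.card V - A.rank)

/-!
If `A * B = 0`, then `(X - A) (X - B) = X (X - (A + B))`, so `χ_A χ_B = X ^ n χ_{A + B}`.
For a Hermitian matrix the root `0` of `χ` has multiplicity `n - rank`, so its pseudo determinant
is `(-1) ^ rank` times the trailing coefficient of `χ`. Comparing trailing degrees of both sides
gives `rank (A + B) = rank A + rank B`, and comparing trailing coefficients then gives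
`Det (A + B) = Det A * Det B`. For the Hodge block, `A = dₖᵀ dₖ` and `B = dₖ₋₁ dₖ₋₁ᵀ` satisfy
`A * B = 0` because `dₖ dₖ₋₁ = 0`.
-/

open Polynomial

namespace Matrix

variable {n : Type*} [Fintype n] [DecidableEq n]

theorem charmatrix_mul_charmatrix_of_mul_eq_zero {R : Type*} [CommRing R] {A B : Matrix n n R}
    (h : A * B = 0) : charmatrix A * charmatrix B = (X : R[X]) • charmatrix (A + B) := by
  have hC : (C : R →+* R[X]).mapMatrix A * (C : R →+* R[X]).mapMatrix B = 0 := by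
    rw [← map_mul, h, map_zero]
  simp only [charmatrix, map_add]
  rw [mul_sub, sub_mul, sub_mul, hC, sub_zero]
  simp only [scalar_apply, ← smul_eq_diagonal_mul, ← op_smul_eq_mul_diagonal, op_smul_eq_smul]
  module

theorem charpoly_mul_charpoly_of_mul_eq_zero {R : Type*} [CommRing R] {A B : Matrix n n R}
    (h : A * B = 0) : A.charpoly * B.charpoly = X ^ Fintype.card n * (A + B).charpoly := by
  rw [charpoly, charpoly, charpoly, ← det_mul, charmatrix_mul_charmatrix_of_mul_eq_zero h,
    det_smul]

section IsHermitian

variable {𝕜 : Type*} [RCLike 𝕜]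

theorem IsHermitian.natTrailingDegree_charpoly {A : Matrix n n 𝕜} (hA : A.IsHermitian) :
    A.charpoly.natTrailingDegree = Fintype.card n - A.rank := by
  classical
  rw [← rootMultiplicity_eq_natTrailingDegree', ← count_roots, hA.roots_charpoly_eq_eigenvalues,
    Multiset.count_map, hA.rank_eq_card_non_zero_eigs, Fintype.card_subtype_compl,
    Nat.sub_sub_self (Fintype.card_subtype_le _), Fintype.card_subtype]
  simp only [Finset.card_def, Finset.filter_val, Function.comp_apply, eq_comm (a := (0 : 𝕜)),
    RCLike.ofReal_eq_zero]

theorem IsHermitian.rank_add_of_mul_eq_zero {A B : Matrix n n 𝕜} (hA : A.IsHermitian)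
    (hB : B.IsHermitian) (h : A * B = 0) : (A + B).rank = A.rank + B.rank := by
  have hdeg := congrArg natTrailingDegree (charpoly_mul_charpoly_of_mul_eq_zero h)
  rw [natTrailingDegree_mul A.charpoly_monic.ne_zero B.charpoly_monic.ne_zero,
    natTrailingDegree_mul (pow_ne_zero _ X_ne_zero) (A + B).charpoly_monic.ne_zero,
    natTrailingDegree_X_pow, hA.natTrailingDegree_charpoly, hB.natTrailingDegree_charpoly,
    (hA.add hB).natTrailingDegree_charpoly] at hdeg
  have := A.rank_le_card_width
  have := B.rank_le_card_width
  have := (A + B).rank_le_card_width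
  omega

end IsHermitian

theorem IsHermitian.pseudoDet_eq_neg_one_pow_rank_mul_trailingCoeff {A : Matrix n n ℝ}
    (hA : A.IsHermitian) : pseudoDet A = (-1) ^ A.rank * A.charpoly.trailingCoeff := by
  rw [pseudoDet, trailingCoeff, hA.natTrailingDegree_charpoly]

theorem IsHermitian.pseudoDet_add_of_mul_eq_zero {A B : Matrix n n ℝ} (hA : A.IsHermitian)
    (hB : B.IsHermitian) (h : A * B = 0) : pseudoDet (A + B) = pseudoDet A * pseudoDet B := by
  have hX : (X ^ Fintype.card n : ℝ[X]).trailingCoeff = 1 := by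
    rw [trailingCoeff, natTrailingDegree_X_pow, coeff_X_pow_self]
  have hcoeff := congrArg trailingCoeff (charpoly_mul_charpoly_of_mul_eq_zero h)
  rw [trailingCoeff_mul, trailingCoeff_mul, hX, one_mul] at hcoeff
  rw [hA.pseudoDet_eq_neg_one_pow_rank_mul_trailingCoeff,
    hB.pseudoDet_eq_neg_one_pow_rank_mul_trailingCoeff,
    (hA.add hB).pseudoDet_eq_neg_one_pow_rank_mul_trailingCoeff,
    hA.rank_add_of_mul_eq_zero hB h, pow_add, ← hcoeff]
  ring

end Matrix

/-- For consecutive exterior derivatives `dprev : ℝ^c → ℝ^a` and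
`dcur : ℝ^a → ℝ^b` of a chain complex (so `dcur * dprev = 0`), the Hodge block
`L = dcurᵀ * dcur + dprev * dprevᵀ` satisfies
`Det(L) = Det(dcurᵀ dcur) * Det(dprev dprevᵀ)`. -/
theorem hodge_block_pseudoDet_eq_mul {a b c : ℕ}
    (dcur : Matrix (Fin b) (Fin a) ℝ) (dprev : Matrix (Fin a) (Fin c) ℝ)
    (hcomplex : dcur * dprev = 0) :
    pseudoDet (dcurᵀ * dcur + dprev * dprevᵀ) =
      pseudoDet (dcurᵀ * dcur) * pseudoDet (dprev * dprevᵀ) := by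
  have hcur : (dcurᵀ * dcur).IsHermitian := by
    simpa using isHermitian_conjTranspose_mul_self dcur
  have hprev : (dprev * dprevᵀ).IsHermitian := by
    simpa using isHermitian_mul_conjTranspose_self dprev
  refine hcur.pseudoDet_add_of_mul_eq_zero hprev ?_
  rw [Matrix.mul_assoc, ← Matrix.mul_assoc dcur, hcomplex, Matrix.zero_mul, Matrix.mul_zero]
end

section
/- For any finite chain complex (matrices d_k with d_{k+1} d_k = 0), the super pseudo determinant of the Hodge Laplacian is 1: the alternating product ∏_k Det(L_k)^{(-1)^{k+1}} = 1, where L_k = d_k^* d_k + d_{k-1} d_{k-1}^*. -/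
/-!
For a symmetric matrix `A` the characteristic polynomial is `X ^ (n - rank A)` times a polynomial
not vanishing at `0`, so `pseudoDet A = (-1) ^ rank A * trailingCoeff (charpoly A)`; trailing
coefficients and trailing degrees are multiplicative. Hence the pseudo determinant is
multiplicative on sums `A + B` of symmetric matrices with `A * B = 0`, because then
`X ^ n * χ(A + B) = χ(A) * χ(B)`, and it does not distinguish `Mᵀ * M` from `M * Mᵀ`, because
`X ^ m * χ(Mᵀ * M) = X ^ n * χ(M * Mᵀ)`. Since `(d_{k+1}ᵀ d_{k+1}) (d_k d_kᵀ) = 0`, writing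
`s k = Det(d_kᵀ d_k)` gives `Det(L 0) = s 0` and `Det(L (k+1)) = s (k+1) * s k`; the alternating
product telescopes to `s r ^ (±1) = 1` because `d r = 0`.
-/

open Matrix

open Polynomial

theorem Polynomial.trailingCoeff_X_pow_mul {R : Type*} [Semiring R] [NoZeroDivisors R]
    [Nontrivial R] (p : R[X]) (k : ℕ) : (X ^ k * p).trailingCoeff = p.trailingCoeff := by
  rw [trailingCoeff_mul, trailingCoeff, natTrailingDegree_X_pow, coeff_X_pow_self, one_mul]

theorem Polynomial.natTrailingDegree_X_pow_mul {R : Type*} [Semiring R] [Nontrivial R]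
    {p : R[X]} (hp : p ≠ 0) (k : ℕ) :
    (X ^ k * p).natTrailingDegree = k + p.natTrailingDegree := by
  rw [(commute_X_pow p k).eq, natTrailingDegree_mul_X_pow hp, add_comm]

theorem Finset.prod_range_zpow_neg_one_pow_of_eq_mul {G : Type*} [CommGroupWithZero G]
    {P s : ℕ → G} (hs : ∀ k, s k ≠ 0) (h0 : P 0 = s 0) (hsucc : ∀ k, P (k + 1) = s (k + 1) * s k)
    (K : ℕ) : ∏ k ∈ range (K + 1), P k ^ ((-1 : ℤ) ^ (k + 1)) = s K ^ ((-1 : ℤ) ^ (K + 1)) := by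
  induction K with
  | zero => simp [h0]
  | succ K ih =>
    have hsign : (-1 : ℤ) ^ (K + 1 + 1) = -(-1) ^ (K + 1) := by ring
    rw [prod_range_succ, ih, hsucc, hsign, mul_zpow, zpow_neg (s K), mul_left_comm,
      mul_inv_cancel₀ (zpow_ne_zero _ (hs K)), mul_one]

namespace Matrix

theorem isHermitian_transpose_mul_self {R m n : Type*} [CommSemiring R] [StarRing R]
    [TrivialStar R] [Fintype m] (M : Matrix m n R) :
    (Mᵀ * M).IsHermitian := by
  simpa only [conjTranspose_eq_transpose_of_trivial] using isHermitian_conjTranspose_mul_self M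

theorem isHermitian_mul_transpose_self {R m n : Type*} [CommSemiring R] [StarRing R]
    [TrivialStar R] [Fintype n] (M : Matrix m n R) :
    (M * Mᵀ).IsHermitian := by
  simpa only [conjTranspose_eq_transpose_of_trivial] using isHermitian_mul_conjTranspose_self M

variable {n : Type*} [Fintype n] [DecidableEq n]

theorem charpoly_add_of_mul_eq_zero {R : Type*} [CommRing R] {A B : Matrix n n R}
    (h : A * B = 0) : X ^ Fintype.card n * (A + B).charpoly = A.charpoly * B.charpoly := by
  have hmat : charmatrix A * charmatrix B = scalar n (X : R[X]) * charmatrix (A + B) := by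
    simp only [charmatrix, sub_mul, mul_sub, ← map_mul, h, map_add, map_zero, add_mul,
      (scalar_commute (X : R[X]) (Commute.all _) _).eq]
    abel
  rw [charpoly, charpoly, charpoly, ← det_mul, hmat, det_mul]
  simp

namespace IsHermitian

theorem natTrailingDegree_charpoly_s1 {𝕜 : Type*} [RCLike 𝕜] {A : Matrix n n 𝕜}
    (hA : A.IsHermitian) :
    A.charpoly.natTrailingDegree = Fintype.card n - A.rank := by
  classical
  rw [← rootMultiplicity_eq_natTrailingDegree', ← count_roots, hA.roots_charpoly_eq_eigenvalues,
    hA.rank_eq_card_non_zero_eigs, Multiset.count_map, Fintype.card_subtype_compl,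
    Nat.sub_sub_self (Fintype.card_subtype_le _), Fintype.card_subtype]
  simp only [Function.comp_apply, eq_comm (a := (0 : 𝕜)), RCLike.ofReal_eq_zero]
  rfl

variable {A B : Matrix n n ℝ}

theorem pseudoDet_eq (hA : A.IsHermitian) :
    pseudoDet A = (-1) ^ A.rank * A.charpoly.trailingCoeff := by
  rw [pseudoDet, trailingCoeff, hA.natTrailingDegree_charpoly_s1]

theorem pseudoDet_ne_zero (hA : A.IsHermitian) : pseudoDet A ≠ 0 := by
  rw [hA.pseudoDet_eq]
  exact mul_ne_zero (pow_ne_zero _ (by norm_num))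
    (trailingCoeff_nonzero_iff_nonzero.mpr (charpoly_monic A).ne_zero)

theorem pseudoDet_add_of_mul_eq_zero_s1 (hA : A.IsHermitian) (hB : B.IsHermitian) (h : A * B = 0) :
    pseudoDet (A + B) = pseudoDet A * pseudoDet B := by
  have hchar := charpoly_add_of_mul_eq_zero h
  have hrank : (A + B).rank = A.rank + B.rank := by
    have hdeg := congrArg natTrailingDegree hchar
    rw [natTrailingDegree_X_pow_mul (charpoly_monic _).ne_zero,
      natTrailingDegree_mul (charpoly_monic _).ne_zero (charpoly_monic _).ne_zero,
      (hA.add hB).natTrailingDegree_charpoly_s1, hA.natTrailingDegree_charpoly_s1,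
      hB.natTrailingDegree_charpoly_s1] at hdeg
    have hABle := (A + B).rank_le_card_width
    have hAle := A.rank_le_card_width
    have hBle := B.rank_le_card_width
    omega
  have hcoeff := congrArg trailingCoeff hchar
  rw [trailingCoeff_X_pow_mul, trailingCoeff_mul] at hcoeff
  rw [(hA.add hB).pseudoDet_eq, hA.pseudoDet_eq, hB.pseudoDet_eq, hrank, hcoeff, pow_add]
  ring

end IsHermitian

theorem pseudoDet_mul_transpose_self {m : Type*} [Fintype m] [DecidableEq m] (M : Matrix m n ℝ) :
    pseudoDet (M * Mᵀ) = pseudoDet (Mᵀ * M) := by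
  have hcoeff := congrArg trailingCoeff (charpoly_mul_comm' M Mᵀ)
  rw [trailingCoeff_X_pow_mul, trailingCoeff_X_pow_mul] at hcoeff
  rw [(isHermitian_mul_transpose_self M).pseudoDet_eq,
    (isHermitian_transpose_mul_self M).pseudoDet_eq, rank_self_mul_transpose,
    rank_transpose_mul_self, hcoeff]

theorem pseudoDet_zero : pseudoDet (0 : Matrix n n ℝ) = 1 := by
  simp [pseudoDet, charpoly_zero]

end Matrix

/-- McKean–Singer: for a finite chain complex given by matrices
`d k : ℝ^{f k} → ℝ^{f (k+1)}` with `d (k+1) * d k = 0` and `d k = 0` for `k ≥ r`,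
the super pseudo determinant of the Hodge Laplacian is `1`:
`∏_{k=0}^{r} Det(L k)^{(-1)^{k+1}} = 1`, where `L 0 = d₀ᵀ d₀` and
`L (k+1) = d_{k+1}ᵀ d_{k+1} + d_k d_kᵀ`. -/
theorem mcKeanSinger_superdet_eq_one (r : ℕ) (f : ℕ → ℕ)
    (d : ∀ k : ℕ, Matrix (Fin (f (k + 1))) (Fin (f k)) ℝ)
    (hcomplex : ∀ k, d (k + 1) * d k = 0)
    (hfin : ∀ k, r ≤ k → d k = 0)
    (L : ∀ k : ℕ, Matrix (Fin (f k)) (Fin (f k)) ℝ)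
    (hL0 : L 0 = (d 0)ᵀ * d 0)
    (hLsucc : ∀ k, L (k + 1) = (d (k + 1))ᵀ * d (k + 1) + d k * (d k)ᵀ) :
    ∏ k ∈ Finset.range (r + 1), pseudoDet (L k) ^ ((-1 : ℤ) ^ (k + 1)) = 1 := by
  set s : ℕ → ℝ := fun k => pseudoDet ((d k)ᵀ * d k)
  have hs : ∀ k, s k ≠ 0 := fun k => (isHermitian_transpose_mul_self (d k)).pseudoDet_ne_zero
  have hLs : ∀ k, pseudoDet (L (k + 1)) = s (k + 1) * s k := by
    intro k
    have horth : (d (k + 1))ᵀ * d (k + 1) * (d k * (d k)ᵀ) = 0 := by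
      rw [Matrix.mul_assoc, ← Matrix.mul_assoc (d (k + 1)), hcomplex, Matrix.zero_mul,
        Matrix.mul_zero]
    rw [hLsucc, (isHermitian_transpose_mul_self _).pseudoDet_add_of_mul_eq_zero_s1
      (isHermitian_mul_transpose_self _) horth, pseudoDet_mul_transpose_self]
  have hsr : s r = 1 := by
    simp only [s, hfin r le_rfl, transpose_zero, Matrix.zero_mul, pseudoDet_zero]
  rw [Finset.prod_range_zpow_neg_one_pow_of_eq_mul hs (by rw [hL0]) hLs, hsr, _root_.one_zpow]
end

section
/- The number of rooted spanning trees of the complete bipartite graph K_{n,m} is n^{m-1} · m^{n-1} · (n+m); equivalently, the pseudo determinant of the Kirchhoff Laplacian of K_{n,m} equals n^{m-1} m^{n-1} (n+m). -/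
/-!
The Laplacian of `K_{n,m}` is the block matrix `[[m I, -J], [-J, n I]]`, so by the Schur complement
and the matrix determinant lemma its characteristic polynomial is
`X (X - (n + m)) (X - m)^(n-1) (X - n)^(m-1)`; for this it suffices to evaluate at the infinitely
many `t ∉ {n, m}`, where the diagonal blocks of `t I - L` are invertible. Since `K_{n,m}` is
connected, the kernel of `L` is one-dimensional, so the rank is `n + m - 1` and the pseudo
determinant is, up to sign, the coefficient of `X` in the characteristic polynomial.
-/

open Matrix
open scoped Classical
open Polynomial

theorem pseudoDet_eq_of_charpoly_eq_X_mul {V : Type*} [Fintype V] [DecidableEq V] [Nonempty V]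
    {A : Matrix V V ℝ} {q : ℝ[X]} (hrank : A.rank = Fintype.card V - 1)
    (hchar : A.charpoly = X * q) :
    pseudoDet A = (-1) ^ (Fintype.card V - 1) * q.eval 0 := by
  rw [pseudoDet, hrank, hchar, Nat.sub_sub_self Fintype.card_pos, coeff_X_mul,
    coeff_zero_eq_eval_zero]

namespace Matrix

variable {K : Type*} [Field K] {ι κ : Type*} [Fintype ι] [Fintype κ] [DecidableEq ι]
  [DecidableEq κ]

theorem det_smul_one_add_of_const {c : K} (hc : c ≠ 0) (s : K) :
    (c • 1 + of fun _ _ => s : Matrix ι ι K).det =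
      c ^ Fintype.card ι * (1 + Fintype.card ι * s / c) := by
  have hupdate : (c • 1 + of fun _ _ => s : Matrix ι ι K) =
      c • (1 + replicateCol Unit (fun _ : ι => s / c) *
        replicateRow Unit (fun _ : ι => (1 : K))) := by
    ext i j
    simp [mul_add, mul_apply, mul_div_cancel₀ _ hc]
  rw [hupdate, det_smul, det_one_add_replicateCol_mul_replicateRow]
  simp [dotProduct, mul_div_assoc]

theorem det_fromBlocks_smul_one_of_one {c d : K} (hc : c ≠ 0) (hd : d ≠ 0) :
    (fromBlocks (c • 1) (of fun _ _ => 1) (of fun _ _ => 1) (d • 1) :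
        Matrix (ι ⊕ κ) (ι ⊕ κ) K).det =
      c ^ Fintype.card ι * d ^ Fintype.card κ *
        (1 - Fintype.card ι * Fintype.card κ / (c * d)) := by
  have hinv : (c • 1 : Matrix ι ι K) * c⁻¹ • 1 = 1 := by simp [smul_smul, hc]
  let : Invertible (c • 1 : Matrix ι ι K) := invertibleOfRightInverse _ _ hinv
  have hschur : (d • 1 : Matrix κ κ K) - of (fun (_ : κ) (_ : ι) => (1 : K)) *
      ⅟(c • 1 : Matrix ι ι K) * of (fun (_ : ι) (_ : κ) => (1 : K)) =
      d • 1 + of fun _ _ => -(Fintype.card ι / c) := by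
    ext i j
    simp [invOf_eq_right_inv hinv, mul_apply, sub_eq_add_neg, div_eq_mul_inv]
  rw [det_fromBlocks₁₁, hschur, det_smul_one_add_of_const hd, det_smul, det_one]
  field_simp
  ring

end Matrix

namespace SimpleGraph

section Laplacian

variable {V : Type*} [Fintype V] [DecidableEq V] (G : SimpleGraph V) [DecidableRel G.Adj]

theorem rank_lapMatrix_add_card_connectedComponent :
    (G.lapMatrix ℝ).rank + Fintype.card G.ConnectedComponent = Fintype.card V := by
  rw [card_connectedComponent_eq_finrank_ker_toLin'_lapMatrix, Matrix.rank,
    ← Module.finrank_fintype_fun_eq_card ℝ]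
  exact LinearMap.finrank_range_add_finrank_ker _

variable {G} in
theorem Connected.rank_lapMatrix (h : G.Connected) :
    (G.lapMatrix ℝ).rank = Fintype.card V - 1 := by
  have hle := Fintype.card_le_one_iff_subsingleton.2 h.preconnected.subsingleton_connectedComponent
  have hpos := Fintype.card_pos_iff.2 (h.nonempty.map G.connectedComponentMk)
  have := G.rank_lapMatrix_add_card_connectedComponent
  omega

end Laplacian

section CompleteBipartite

variable {α β : Type*}

theorem completeBipartiteGraph_connected [Nonempty α] [Nonempty β] :
    (completeBipartiteGraph α β).Connected := by
  obtain ⟨a⟩ := ‹Nonempty α›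
  obtain ⟨b⟩ := ‹Nonempty β›
  refine (connected_iff_exists_forall_reachable _).2 ⟨.inl a, ?_⟩
  rintro (a' | b')
  · exact (Adj.reachable (by simp) :
      (completeBipartiteGraph α β).Reachable (.inl a) (.inr b)).trans (Adj.reachable (by simp))
  · exact Adj.reachable (by simp)

variable [Fintype α] [Fintype β] [DecidableRel (completeBipartiteGraph α β).Adj]

theorem neighborFinset_completeBipartiteGraph_inl (a : α) :
    (completeBipartiteGraph α β).neighborFinset (.inl a) = Finset.univ.map .inr := by
  ext (_ | _) <;> simp

theorem neighborFinset_completeBipartiteGraph_inr (b : β) :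
    (completeBipartiteGraph α β).neighborFinset (.inr b) = Finset.univ.map .inl := by
  ext (_ | _) <;> simp

variable [DecidableEq α] [DecidableEq β]

theorem lapMatrix_completeBipartiteGraph (R : Type*) [Ring R] :
    (completeBipartiteGraph α β).lapMatrix R =
      fromBlocks ((Fintype.card β : R) • 1) (-of fun _ _ => 1)
        (-of fun _ _ => 1) ((Fintype.card α : R) • 1) := by
  ext (a | b) (a' | b') <;>
    simp [lapMatrix, degMatrix, ← card_neighborFinset_eq_degree,
      neighborFinset_completeBipartiteGraph_inl, neighborFinset_completeBipartiteGraph_inr,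
      one_apply, diagonal_apply]

theorem charpoly_lapMatrix_completeBipartiteGraph [Nonempty α] [Nonempty β]
    (K : Type*) [Field K] [Infinite K] :
    ((completeBipartiteGraph α β).lapMatrix K).charpoly =
      X * ((X - C (Fintype.card α + Fintype.card β : K)) *
        (X - C (Fintype.card β : K)) ^ (Fintype.card α - 1) *
        (X - C (Fintype.card α : K)) ^ (Fintype.card β - 1)) := by
  refine eq_of_infinite_eval_eq _ _ ((Set.toFinite
    {(Fintype.card α : K), (Fintype.card β : K)}).infinite_compl.mono fun t ht => ?_)
  simp only [Set.mem_compl_iff, Set.mem_insert_iff, Set.mem_singleton_iff, not_or] at ht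
  obtain ⟨hta, htb⟩ := And.imp sub_ne_zero_of_ne sub_ne_zero_of_ne ht
  have hblocks : scalar (α ⊕ β) t - (completeBipartiteGraph α β).lapMatrix K =
      fromBlocks ((t - Fintype.card β) • 1) (of fun _ _ => 1) (of fun _ _ => 1)
        ((t - Fintype.card α) • 1) := by
    rw [lapMatrix_completeBipartiteGraph]
    ext (i | i) (j | j) <;> simp [one_apply, diagonal_apply] <;> split_ifs <;> simp
  rw [Set.mem_ofPred_eq, eval_charpoly, hblocks, det_fromBlocks_smul_one_of_one htb hta]
  obtain ⟨a, ha⟩ := Nat.exists_eq_add_one.2 (Fintype.card_pos (α := α))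
  obtain ⟨b, hb⟩ := Nat.exists_eq_add_one.2 (Fintype.card_pos (α := β))
  rw [ha] at hta ⊢
  rw [hb] at htb ⊢
  simp only [eval_mul, eval_pow, eval_sub, eval_X, eval_C, Nat.add_sub_cancel, pow_succ]
  field_simp
  push_cast
  ring

end CompleteBipartite

end SimpleGraph

/-- the number of rooted spanning trees of the complete bipartite
graph `K_{n,m}` (with `n, m ≥ 1`), i.e. the pseudo determinant of its Kirchhoff
Laplacian, equals `n^{m-1} · m^{n-1} · (n+m)`. -/
theorem pseudoDet_lapMatrix_completeBipartite (n m : ℕ) (hn : 1 ≤ n) (hm : 1 ≤ m) :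
    pseudoDet ((completeBipartiteGraph (Fin n) (Fin m)).lapMatrix ℝ) =
      (n : ℝ) ^ (m - 1) * (m : ℝ) ^ (n - 1) * (n + m : ℝ) := by
  have : Nonempty (Fin n) := ⟨⟨0, hn⟩⟩
  have : Nonempty (Fin m) := ⟨⟨0, hm⟩⟩
  rw [pseudoDet_eq_of_charpoly_eq_X_mul
    SimpleGraph.completeBipartiteGraph_connected.rank_lapMatrix
    (SimpleGraph.charpoly_lapMatrix_completeBipartiteGraph ℝ)]
  simp only [Fintype.card_sum, Fintype.card_fin, eval_mul, eval_pow, eval_sub, eval_X, eval_C,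
    zero_sub]
  have hsign : -(n + m : ℝ) * (-m) ^ (n - 1) * (-n) ^ (m - 1) =
      (-1) ^ (n + m - 1) * ((n + m) * m ^ (n - 1) * n ^ (m - 1)) := by
    rw [show n + m - 1 = (n - 1) + (m - 1) + 1 by omega, neg_pow (m : ℝ), neg_pow (n : ℝ)]
    ring
  rw [hsign, ← mul_assoc, ← mul_pow, neg_one_mul, neg_neg, one_pow, one_mul]
  ring
end

section
/- For the complete graph K_n (n ≥ 2) and its Whitney complex, the pseudo determinant of the k-th Dirac block satisfies Det(D_k(K_n)) = n^{C(n-1, k+1)} for all k ≥ 0, where D_k = d_k^* d_k and C denotes binomial coefficients. -/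
open Matrix

/-- The `k`-dimensional simplices of the Whitney complex of the complete graph
`K n`: subsets of `{1,…,n}` of cardinality `k+1`. -/
def CompleteSimplex (n k : ℕ) := {s : Finset (Fin n) // s.card = k + 1}

instance (n k : ℕ) : Fintype (CompleteSimplex n k) := by
  unfold CompleteSimplex; infer_instance

instance (n k : ℕ) : DecidableEq (CompleteSimplex n k) := by
  unfold CompleteSimplex; infer_instance

/-- The signed incidence matrix (exterior derivative) `d_k` from `k`-forms to
`(k+1)`-forms of the Whitney complex of `K n`, with simplices ordered by the
natural order on `Fin n`: the entry at `(s, t)` with `t ⊆ s` is `(-1)^i` where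
`i` is the position in `s` of the vertex missing from `t`. -/
def completeD (n k : ℕ) :
    Matrix (CompleteSimplex n (k + 1)) (CompleteSimplex n k) ℝ :=
  fun s t =>
    if t.1 ⊆ s.1 then
      ∑ a ∈ s.1 \ t.1, (-1 : ℝ) ^ (s.1.filter (fun b => b < a)).card
    else 0

/-!
The Whitney complex of `K_n` is the full simplex on `n` vertices, whose cochains form the exterior
algebra `Λ(ℝⁿ)`: the coboundary is `d = ∑ₐ εₐ`, where `εₐ` is left multiplication by `eₐ`. The
anticommutation relations `εₐ ε_b + ε_b εₐ = 0` and `εₐᵀ ε_b + ε_b εₐᵀ = δₐ_b` give `d² = 0` and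
`dᵀ d + d dᵀ = n`. Hence the Dirac block `D = d_kᵀ d_k` satisfies
`D² = d_kᵀ (n - d_{k+1}ᵀ d_{k+1}) d_k = n D`, so the symmetric matrix `D` has eigenvalues in
`{0, n}` and `Det D = n ^ rank D`. Finally `n · rank D = tr D = C(n, k+1) (n - k - 1)`, which is
`n · C(n-1, k+1)`.
-/

open Finset Polynomial

namespace Matrix.IsHermitian

variable {m : Type*} [Fintype m] [DecidableEq m] {A : Matrix m m ℝ}

theorem pseudoDet_eq_prod_eigenvalues (hA : A.IsHermitian) :
    pseudoDet A = ∏ i with hA.eigenvalues i ≠ 0, hA.eigenvalues i := by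
  set r := #{i | hA.eigenvalues i ≠ 0}
  set z := #{i | ¬hA.eigenvalues i ≠ 0}
  have hrank : A.rank = r := by rw [hA.rank_eq_card_non_zero_eigs, Fintype.card_subtype]
  have hcard : Fintype.card m - r = z := by
    rw [← Finset.card_univ, ← Finset.card_filter_add_card_filter_not (s := univ)
      (fun i => hA.eigenvalues i ≠ 0)]
    omega
  have hcharpoly :
      A.charpoly = (∏ i with hA.eigenvalues i ≠ 0, (X - C (hA.eigenvalues i))) * X ^ z := by
    rw [hA.charpoly_eq, ← prod_filter_mul_prod_filter_not univ (fun i => hA.eigenvalues i ≠ 0)]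
    congr 1
    refine (prod_congr rfl fun i hi => ?_).trans (prod_const X)
    simp [not_not.1 (mem_filter.1 hi).2]
  rw [pseudoDet, hrank, hcard, hcharpoly, coeff_mul_X_pow', if_pos le_rfl, Nat.sub_self,
    coeff_zero_eq_eval_zero, eval_prod]
  simp only [eval_sub, eval_X, eval_C, zero_sub]
  rw [prod_neg, ← mul_assoc, ← mul_pow, neg_one_mul, neg_neg, one_pow, one_mul]

theorem eigenvalues_eq_zero_or_eq_of_mul_self_eq_smul (hA : A.IsHermitian) {c : ℝ}
    (h : A * A = c • A) (i : m) : hA.eigenvalues i = 0 ∨ hA.eigenvalues i = c := by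
  have : Nonempty m := ⟨i⟩
  have hroot := spectrum.subset_polynomial_aeval A (X * (X - C c))
    ⟨_, hA.eigenvalues_mem_spectrum_real i, rfl⟩
  have hzero : aeval A (X * (X - C c)) = 0 := by
    simp [mul_sub, h, Algebra.smul_def]
  rw [hzero, spectrum.zero_eq, Set.mem_singleton_iff] at hroot
  simpa [sub_eq_zero] using hroot

theorem pseudoDet_eq_pow_rank_of_mul_self_eq_smul (hA : A.IsHermitian) {c : ℝ}
    (h : A * A = c • A) : pseudoDet A = c ^ A.rank := by
  rw [hA.pseudoDet_eq_prod_eigenvalues, hA.rank_eq_card_non_zero_eigs, Fintype.card_subtype]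
  exact prod_eq_pow_card fun i hi =>
    (hA.eigenvalues_eq_zero_or_eq_of_mul_self_eq_smul h i).resolve_left (mem_filter.1 hi).2

theorem trace_eq_mul_rank_of_mul_self_eq_smul (hA : A.IsHermitian) {c : ℝ}
    (h : A * A = c • A) : A.trace = c * A.rank := by
  rw [hA.trace_eq_sum_eigenvalues, hA.rank_eq_card_non_zero_eigs, Fintype.card_subtype]
  simp only [RCLike.ofReal_real_eq_id, id]
  rw [← sum_filter_ne_zero, sum_eq_card_nsmul fun i hi =>
    (hA.eigenvalues_eq_zero_or_eq_of_mul_self_eq_smul h i).resolve_left (mem_filter.1 hi).2,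
    nsmul_eq_mul, mul_comm]

end Matrix.IsHermitian

theorem Finset.eq_of_insert_eq_insert {α : Type*} [DecidableEq α] {a : α} {s t : Finset α}
    (hs : a ∉ s) (ht : a ∉ t) (h : insert a s = insert a t) : s = t := by
  rw [← erase_insert hs, h, erase_insert ht]

namespace FullSimplex

variable {α : Type*} [LinearOrder α]

/-- With `e_s` the wedge product of the `e_b`, `b ∈ s`, in increasing order,
`e_a ∧ e_t = wedgeSign t a • e_{insert a t}` for `a ∉ t`. -/
def wedgeSign (t : Finset α) (a : α) : ℝ := (-1) ^ #{b ∈ t | b < a}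

theorem wedgeSign_mul_self (t : Finset α) (a : α) : wedgeSign t a * wedgeSign t a = 1 := by
  rw [wedgeSign, ← mul_pow]; norm_num

theorem wedgeSign_insert_of_not_lt {a b : α} (t : Finset α) (h : ¬b < a) :
    wedgeSign (insert b t) a = wedgeSign t a := by
  rw [wedgeSign, wedgeSign, filter_insert, if_neg h]

theorem wedgeSign_insert_of_lt {a b : α} {t : Finset α} (h : b < a) (hb : b ∉ t) :
    wedgeSign (insert b t) a = -wedgeSign t a := by
  rw [wedgeSign, wedgeSign, filter_insert, if_pos h,
    card_insert_of_notMem (by simp [hb]), pow_succ, mul_neg_one]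

theorem wedgeSign_insert_self (t : Finset α) (a : α) :
    wedgeSign (insert a t) a = wedgeSign t a :=
  wedgeSign_insert_of_not_lt t (lt_irrefl a)

theorem wedgeSign_mul_wedgeSign_insert_swap {a b : α} {t : Finset α} (hab : a ≠ b)
    (ha : a ∉ t) (hb : b ∉ t) :
    wedgeSign t b * wedgeSign (insert b t) a = -(wedgeSign t a * wedgeSign (insert a t) b) := by
  rcases hab.lt_or_gt with h | h
  · rw [wedgeSign_insert_of_not_lt _ h.not_gt, wedgeSign_insert_of_lt h ha]; ring
  · rw [wedgeSign_insert_of_lt h hb, wedgeSign_insert_of_not_lt _ h.not_gt]; ring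

theorem wedgeSign_insert_mul_wedgeSign_insert {a b : α} {t : Finset α} (hab : a ≠ b)
    (ha : a ∉ t) (hb : b ∉ t) :
    wedgeSign (insert b t) a * wedgeSign (insert a t) b = -(wedgeSign t a * wedgeSign t b) := by
  rcases hab.lt_or_gt with h | h
  · rw [wedgeSign_insert_of_not_lt _ h.not_gt, wedgeSign_insert_of_lt h ha]; ring
  · rw [wedgeSign_insert_of_lt h hb, wedgeSign_insert_of_not_lt _ h.not_gt]; ring

def wedge (a : α) : Matrix (Finset α) (Finset α) ℝ :=
  fun s t => if a ∉ t ∧ s = insert a t then wedgeSign t a else 0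

theorem wedge_apply_eq_ite_erase (a : α) (s t : Finset α) :
    wedge a s t = if a ∈ s ∧ t = s.erase a then wedgeSign t a else 0 := by
  have : (a ∉ t ∧ s = insert a t) ↔ (a ∈ s ∧ t = s.erase a) := by
    constructor
    · rintro ⟨ha, rfl⟩; exact ⟨mem_insert_self a t, (erase_insert ha).symm⟩
    · rintro ⟨ha, rfl⟩; exact ⟨notMem_erase a s, (insert_erase ha).symm⟩
  simp only [wedge, this]

variable [Fintype α]

theorem mul_wedge_apply (M : Matrix (Finset α) (Finset α) ℝ) (a : α) (u t : Finset α) :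
    (M * wedge a) u t = if a ∉ t then M u (insert a t) * wedgeSign t a else 0 := by
  by_cases ha : a ∈ t <;> simp [mul_apply, wedge, ha]

theorem transpose_wedge_mul_apply (a : α) (M : Matrix (Finset α) (Finset α) ℝ)
    (s t : Finset α) :
    ((wedge a)ᵀ * M) s t = if a ∉ s then wedgeSign s a * M (insert a s) t else 0 := by
  by_cases ha : a ∈ s <;> simp [mul_apply, wedge, ha]

theorem mul_transpose_wedge_apply (M : Matrix (Finset α) (Finset α) ℝ) (a : α)
    (s t : Finset α) :
    (M * (wedge a)ᵀ) s t = if a ∈ t then M s (t.erase a) * wedgeSign (t.erase a) a else 0 := by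
  by_cases ha : a ∈ t <;> simp [mul_apply, wedge_apply_eq_ite_erase, ha]

theorem wedge_mul_wedge_add_wedge_mul_wedge (a b : α) :
    wedge a * wedge b + wedge b * wedge a = 0 := by
  ext u t
  rw [Matrix.add_apply, mul_wedge_apply, mul_wedge_apply, Matrix.zero_apply]
  by_cases hab : a = b
  · subst hab; simp [wedge]
  by_cases ha : a ∈ t
  · simp [wedge, ha]
  by_cases hb : b ∈ t
  · simp [wedge, hb]
  simp only [wedge, ha, hb, not_false_eq_true, mem_insert, hab, Ne.symm hab, or_self,
    true_and, if_true, insert_comm b a]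
  split_ifs
  · linear_combination wedgeSign_mul_wedgeSign_insert_swap hab ha hb
  · simp

theorem transpose_wedge_mul_wedge_add_wedge_mul_transpose_wedge_of_ne {a b : α} (hab : a ≠ b) :
    (wedge a)ᵀ * wedge b + wedge b * (wedge a)ᵀ = 0 := by
  ext s s'
  rw [Matrix.zero_apply, Matrix.add_apply, transpose_wedge_mul_apply, mul_transpose_wedge_apply]
  by_cases has' : a ∈ s'
  swap
  · have : insert a s ≠ insert b s' := fun h => by
      have : a ∈ insert b s' := h ▸ mem_insert_self a s
      simp [hab, has'] at this
    simp [wedge, has', this]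
  obtain ⟨t, hat, rfl⟩ : ∃ t, a ∉ t ∧ s' = insert a t :=
    ⟨s'.erase a, notMem_erase a s', (insert_erase has').symm⟩
  rw [if_pos (mem_insert_self a t), erase_insert hat]
  by_cases hbt : b ∈ t
  · simp [wedge, hbt]
  by_cases hs : s = insert b t
  · subst hs
    simp only [wedge, mem_insert, hab, Ne.symm hab, hat, hbt, or_self, not_false_eq_true,
      true_and, if_true, insert_comm a b]
    linear_combination wedgeSign_insert_mul_wedgeSign_insert hab hat hbt
  by_cases has : a ∈ s
  · simp [wedge, has, hs]
  have : ¬(b ∉ insert a t ∧ insert a s = insert b (insert a t)) := fun ⟨_, h⟩ => hs <|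
    eq_of_insert_eq_insert has (by simp [hab, hat]) (h.trans (insert_comm _ _ _))
  simp only [wedge, if_neg this, hs, and_false, if_false, mul_zero, zero_mul, ite_self, add_zero]

theorem transpose_wedge_mul_wedge_add_wedge_mul_transpose_wedge_self (a : α) :
    (wedge a)ᵀ * wedge a + wedge a * (wedge a)ᵀ = 1 := by
  ext s s'
  rw [Matrix.add_apply, transpose_wedge_mul_apply, mul_transpose_wedge_apply, one_apply]
  by_cases h : s = s'
  · subst h
    by_cases ha : a ∈ s <;> simp [wedge, ha, wedgeSign_mul_self]
  have h₁ : ∀ ha : a ∉ s, ¬(a ∉ s' ∧ insert a s = insert a s') :=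
    fun ha ⟨ha', hs⟩ => h (eq_of_insert_eq_insert ha ha' hs)
  have h₂ : ∀ ha : a ∈ s', s ≠ insert a (s'.erase a) := fun ha => by rwa [insert_erase ha]
  simp only [wedge, if_neg h]
  split_ifs <;> simp_all

def coboundary (α : Type*) [LinearOrder α] [Fintype α] : Matrix (Finset α) (Finset α) ℝ :=
  ∑ a, wedge a

theorem coboundary_mul_self : coboundary α * coboundary α = 0 := by
  have hS : ∑ a : α, ∑ b, wedge a * wedge b + ∑ a : α, ∑ b, wedge b * wedge a = 0 := by
    simp_rw [← sum_add_distrib, wedge_mul_wedge_add_wedge_mul_wedge, sum_const_zero]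
  rw [sum_comm (f := fun a b => wedge b * wedge a), ← two_smul ℝ] at hS
  rw [coboundary, sum_mul_sum]
  exact (smul_eq_zero.1 hS).resolve_left two_ne_zero

theorem transpose_coboundary_mul_add_mul_transpose :
    (coboundary α)ᵀ * coboundary α + coboundary α * (coboundary α)ᵀ =
      (Fintype.card α : ℝ) • 1 := by
  rw [coboundary, transpose_sum, sum_mul_sum, sum_mul_sum, sum_comm (s := univ) (t := univ)
    (f := fun b a => wedge b * (wedge a)ᵀ), ← sum_add_distrib]
  have key (a : α) : ∑ b, (wedge a)ᵀ * wedge b + ∑ b, wedge b * (wedge a)ᵀ = 1 := by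
    rw [← sum_add_distrib, sum_eq_single a]
    · exact transpose_wedge_mul_wedge_add_wedge_mul_transpose_wedge_self a
    · exact fun b _ hba => transpose_wedge_mul_wedge_add_wedge_mul_transpose_wedge_of_ne hba.symm
    · simp
  rw [sum_congr rfl fun a _ => key a, sum_const, card_univ, Nat.cast_smul_eq_nsmul]

theorem transpose_coboundary_mul_coboundary_apply_self (t : Finset α) :
    ((coboundary α)ᵀ * coboundary α) t t = #tᶜ := by
  have key (a b : α) : ((wedge a)ᵀ * wedge b) t t = if b = a ∧ a ∉ t then 1 else 0 := by
    rw [transpose_wedge_mul_apply]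
    by_cases ha : a ∈ t
    · simp [ha]
    by_cases hab : b = a
    · subst hab
      simp [wedge, ha, wedgeSign_mul_self]
    · have : insert a t ≠ insert b t := fun h => hab ((insert_inj ha).1 h).symm
      simp [wedge, this, hab]
  simp only [coboundary, transpose_sum, sum_mul_sum, Matrix.sum_apply, key, ite_and]
  simp [sum_ite, filter_not, compl_eq_univ_sdiff]

theorem coboundary_apply_of_card_eq {s t : Finset α} (h : #s = #t + 1) :
    coboundary α s t = if t ⊆ s then ∑ a ∈ s \ t, wedgeSign s a else 0 := by
  have hwedge (a : α) : wedge a s t = if t ⊆ s ∧ a ∈ s \ t then wedgeSign s a else 0 := by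
    have : (a ∉ t ∧ s = insert a t) ↔ (t ⊆ s ∧ a ∈ s \ t) := by
      constructor
      · rintro ⟨ha, rfl⟩
        exact ⟨subset_insert a t, by simp [ha]⟩
      · rintro ⟨hts, has⟩
        have ha := (mem_sdiff.1 has).2
        refine ⟨ha, (eq_of_subset_of_card_le (insert_subset (mem_sdiff.1 has).1 hts) ?_).symm⟩
        rw [card_insert_of_notMem ha, h]
    by_cases h' : t ⊆ s ∧ a ∈ s \ t
    · rw [wedge, if_pos (this.2 h'), if_pos h', (this.2 h').2, wedgeSign_insert_self]
    · rw [wedge, if_neg (mt this.1 h'), if_neg h']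
  rw [coboundary, Matrix.sum_apply, sum_congr rfl fun a _ => hwedge a]
  split_ifs with hts
  · simp only [hts, true_and, sum_ite_mem, univ_inter]
  · simp [hts]

theorem coboundary_apply_eq_zero_of_card_ne {s t : Finset α} (h : #s ≠ #t + 1) :
    coboundary α s t = 0 := by
  refine (Matrix.sum_apply s t univ wedge).trans (sum_eq_zero fun a _ => if_neg ?_)
  rintro ⟨ha, rfl⟩
  exact h (card_insert_of_notMem ha)

end FullSimplex

theorem Matrix.submatrix_mul_submatrix_of_injective {l m n o p q R : Type*} [Fintype m] [Fintype q]
    [NonUnitalNonAssocSemiring R] (A : Matrix l m R) (B : Matrix m n R) (f : o → l) {e : q → m}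
    (g : p → n) (he : Function.Injective e)
    (h : ∀ i x j, x ∉ Set.range e → A (f i) x * B x (g j) = 0) :
    A.submatrix f e * B.submatrix e g = (A * B).submatrix f g := by
  ext i j
  simp only [mul_apply, submatrix_apply]
  refine (sum_map univ ⟨e, he⟩ fun x => A (f i) x * B x (g j)).symm.trans <|
    sum_subset (subset_univ _) fun x _ hx => h i x j ?_
  rintro ⟨c, rfl⟩
  exact hx (mem_map_of_mem _ (mem_univ c))

theorem Matrix.transpose_mul_self_mul_transpose_mul_self {l m o R : Type*} [Fintype l] [Fintype m]
    [Fintype o] [DecidableEq m] [CommRing R] {d : Matrix m l R} {d' : Matrix o m R} {c : R}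
    (hd : d' * d = 0) (hL : d'ᵀ * d' + d * dᵀ = c • 1) :
    dᵀ * d * (dᵀ * d) = c • (dᵀ * d) := by
  calc dᵀ * d * (dᵀ * d) = dᵀ * (d * dᵀ) * d := by simp only [Matrix.mul_assoc]
    _ = dᵀ * (c • 1 - d'ᵀ * d') * d := by rw [← hL, add_sub_cancel_left]
    _ = c • (dᵀ * d) - (d' * d)ᵀ * (d' * d) := by
      simp only [Matrix.mul_sub, Matrix.sub_mul, transpose_mul, Matrix.mul_assoc, Matrix.mul_smul,
        Matrix.smul_mul, Matrix.mul_one]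
    _ = c • (dᵀ * d) := by rw [hd, Matrix.mul_zero, sub_zero]

open FullSimplex

namespace CompleteSimplex

variable {n k : ℕ}

theorem card_eq_choose (n k : ℕ) : Fintype.card (CompleteSimplex n k) = n.choose (k + 1) :=
  (Fintype.card_finset_len (k + 1)).trans (by rw [Fintype.card_fin])

def vertices (s : CompleteSimplex n k) : Finset (Fin n) := s.1

theorem card_vertices (s : CompleteSimplex n k) : #s.vertices = k + 1 := s.2

theorem vertices_injective (n k : ℕ) :
    Function.Injective (vertices : CompleteSimplex n k → Finset (Fin n)) :=
  fun _ _ => Subtype.ext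

theorem coboundary_vertices_apply_eq_zero (u : CompleteSimplex n (k + 1)) {s : Finset (Fin n)}
    (hs : s ∉ Set.range (vertices : CompleteSimplex n k → _)) :
    coboundary (Fin n) u.vertices s = 0 :=
  coboundary_apply_eq_zero_of_card_ne fun h =>
    hs ⟨⟨s, by rw [u.card_vertices] at h; omega⟩, rfl⟩

theorem coboundary_apply_vertices_eq_zero (t : CompleteSimplex n k) {s : Finset (Fin n)}
    (hs : s ∉ Set.range (vertices : CompleteSimplex n (k + 1) → _)) :
    coboundary (Fin n) s t.vertices = 0 :=
  coboundary_apply_eq_zero_of_card_ne fun h => hs ⟨⟨s, by rw [h, t.card_vertices]⟩, rfl⟩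

end CompleteSimplex

open CompleteSimplex

theorem completeD_eq_submatrix_coboundary (n k : ℕ) :
    completeD n k = (coboundary (Fin n)).submatrix vertices vertices := by
  ext s t
  exact (coboundary_apply_of_card_eq (by rw [s.2, t.2])).symm

theorem completeD_mul_completeD (n k : ℕ) : completeD n (k + 1) * completeD n k = 0 := by
  rw [completeD_eq_submatrix_coboundary, completeD_eq_submatrix_coboundary,
    submatrix_mul_submatrix_of_injective _ _ _ _ (vertices_injective n (k + 1)),
    coboundary_mul_self, submatrix_zero]
  · rfl
  · intro u s t hs
    rw [coboundary_vertices_apply_eq_zero u hs, zero_mul]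

theorem completeD_laplacian (n k : ℕ) :
    (completeD n (k + 1))ᵀ * completeD n (k + 1) + completeD n k * (completeD n k)ᵀ =
      (n : ℝ) • 1 := by
  have h := congrArg (submatrix · (vertices (k := k + 1)) (vertices (k := k + 1)))
    (transpose_coboundary_mul_add_mul_transpose (α := Fin n))
  simp only [submatrix_smul, Pi.smul_apply, submatrix_one _ (vertices_injective n (k + 1)),
    Fintype.card_fin] at h
  rw [completeD_eq_submatrix_coboundary, completeD_eq_submatrix_coboundary, transpose_submatrix,
    transpose_submatrix,
    submatrix_mul_submatrix_of_injective _ _ _ _ (vertices_injective n (k + 2)),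
    submatrix_mul_submatrix_of_injective _ _ _ _ (vertices_injective n k)]
  · exact h
  · intro s t s' ht
    rw [coboundary_vertices_apply_eq_zero s ht, zero_mul]
  · intro s t s' ht
    rw [transpose_apply, coboundary_apply_vertices_eq_zero s ht, zero_mul]

theorem trace_transpose_completeD_mul_completeD (n k : ℕ) :
    ((completeD n k)ᵀ * completeD n k).trace = n.choose (k + 1) * (n - (k + 1) : ℕ) := by
  rw [completeD_eq_submatrix_coboundary, transpose_submatrix,
    submatrix_mul_submatrix_of_injective _ _ _ _ (vertices_injective n (k + 1))]
  · simp only [trace, diag_apply, submatrix_apply, transpose_coboundary_mul_coboundary_apply_self,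
      card_compl, Fintype.card_fin, card_vertices]
    rw [sum_const, card_univ, card_eq_choose, nsmul_eq_mul]
  · intro t s t' hs
    rw [transpose_apply, coboundary_apply_vertices_eq_zero t hs, zero_mul]

/-- generalized Cayley formula, Dirac blocks: for the complete
graph `K n` with `n ≥ 2`, the pseudo determinant of the `k`-th Dirac block
`D_k = d_kᵀ d_k` equals `n^{C(n-1, k+1)}` for all `k ≥ 0`. -/
theorem pseudoDet_diracBlock_completeGraph (n : ℕ) (hn : 2 ≤ n) (k : ℕ) :
    pseudoDet ((completeD n k)ᵀ * completeD n k) =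
      (n : ℝ) ^ Nat.choose (n - 1) (k + 1) := by
  have hH : ((completeD n k)ᵀ * completeD n k).IsHermitian := by
    simpa using isHermitian_conjTranspose_mul_self (completeD n k)
  have hsq := transpose_mul_self_mul_transpose_mul_self (completeD_mul_completeD n k)
    (completeD_laplacian n k)
  have hrank : ((completeD n k)ᵀ * completeD n k).rank = (n - 1).choose (k + 1) := by
    have htrace := hH.trace_eq_mul_rank_of_mul_self_eq_smul hsq
    have hchoose := Nat.choose_mul_succ_eq (n - 1) (k + 1)
    rw [Nat.sub_add_cancel (by omega)] at hchoose
    rw [trace_transpose_completeD_mul_completeD, ← Nat.cast_mul, ← hchoose, Nat.cast_mul,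
      mul_comm] at htrace
    exact_mod_cast (mul_left_cancel₀ (by exact_mod_cast (by omega : n ≠ 0)) htrace).symm
  rw [hH.pseudoDet_eq_pow_rank_of_mul_self_eq_smul hsq, hrank]
end

section
/- For the complete graph K_n and its Whitney complex, the pseudo determinant of the k-th Hodge block satisfies Det(L_k(K_n)) = n^{C(n, k+1)} for k ≥ 1 and Det(L_0(K_n)) = n^{n-1}. -/
open Matrix

section Aux
open Finset Polynomial

namespace CayleyAux

variable {n : ℕ}

noncomputable def ee (s t : Finset (Fin n)) : ℝ :=
  if t ⊆ s then ∑ a ∈ s \ t, (-1 : ℝ) ^ (s.filter (fun b => b < a)).card else 0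

lemma ee_of_not_subset {s t : Finset (Fin n)} (h : ¬ t ⊆ s) : ee s t = 0 := if_neg h

lemma ee_eq_sign {s t : Finset (Fin n)} (h : t ⊆ s) {a : Fin n} (ha : s \ t = {a}) :
    ee s t = (-1 : ℝ) ^ (s.filter (fun b => b < a)).card := by
  rw [ee, if_pos h, ha, Finset.sum_singleton]

lemma exists_extra {s t : Finset (Fin n)} (h : t ⊆ s) (hc : s.card = t.card + 1) :
    ∃ a, a ∉ t ∧ s \ t = {a} ∧ s = insert a t := by
  have h1 : (s \ t).card = 1 := by rw [Finset.card_sdiff_of_subset h]; omega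
  obtain ⟨a, ha⟩ := Finset.card_eq_one.mp h1
  refine ⟨a, ?_, ha, ?_⟩
  · have : a ∈ s \ t := by rw [ha]; exact Finset.mem_singleton_self a
    exact (Finset.mem_sdiff.mp this).2
  · have := Finset.union_sdiff_of_subset h
    rw [ha] at this
    rw [← this, Finset.union_comm, ← Finset.insert_eq]

lemma ee_sq {s t : Finset (Fin n)} (h : t ⊆ s) (hc : s.card = t.card + 1) :
    ee s t * ee s t = 1 := by
  obtain ⟨a, -, ha, -⟩ := exists_extra h hc
  rw [ee_eq_sign h ha, ← pow_add, ← two_mul, pow_mul]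
  norm_num

lemma filter_insert_card {u : Finset (Fin n)} {x : Fin n} (hx : x ∉ u) (y : Fin n) :
    ((insert x u).filter (fun b => b < y)).card
      = (u.filter (fun b => b < y)).card + if x < y then 1 else 0 := by
  rw [Finset.filter_insert]
  split
  · rw [Finset.card_insert_of_notMem (fun hmem => hx (Finset.mem_of_mem_filter x hmem))]
  · rw [add_zero]

lemma up_diag {m : ℕ} {t : Finset (Fin n)} (ht : t.card = m + 1) :
    ∑ s ∈ Finset.powersetCard (m + 2) (Finset.univ : Finset (Fin n)), ee s t * ee s t
      = ((n - (m + 1) : ℕ) : ℝ) := by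
  have step : ∑ s ∈ Finset.powersetCard (m + 2) (Finset.univ : Finset (Fin n)), ee s t * ee s t
      = ∑ s ∈ Finset.powersetCard (m + 2) (Finset.univ : Finset (Fin n)),
          (if t ⊆ s then (1:ℝ) else 0) := by
    refine Finset.sum_congr rfl (fun s hs => ?_)
    rw [Finset.mem_powersetCard_univ] at hs
    by_cases h : t ⊆ s
    · rw [if_pos h, ee_sq h (by omega)]
    · rw [if_neg h, ee_of_not_subset h, mul_zero]
  rw [step, Finset.sum_boole]
  congr 1
  have hbij : (Finset.univ \ t).card
      = (Finset.filter (fun s => t ⊆ s) (Finset.powersetCard (m + 2)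
          (Finset.univ : Finset (Fin n)))).card := by
    apply Finset.card_bij (fun (a : Fin n) (_ : a ∈ Finset.univ \ t) => insert a t)
    · intro a ha
      rw [Finset.mem_sdiff] at ha
      rw [Finset.mem_filter, Finset.mem_powersetCard_univ]
      exact ⟨by rw [Finset.card_insert_of_notMem ha.2, ht], Finset.subset_insert a t⟩
    · intro a ha b hb hab
      rw [Finset.mem_sdiff] at ha hb
      have : a ∈ insert b t := hab ▸ Finset.mem_insert_self a t
      rcases Finset.mem_insert.mp this with h | h
      · exact h
      · exact absurd h ha.2
    · intro s hs
      rw [Finset.mem_filter, Finset.mem_powersetCard_univ] at hs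
      obtain ⟨a, hat, -, hins⟩ := exists_extra hs.2 (by omega)
      exact ⟨a, Finset.mem_sdiff.mpr ⟨Finset.mem_univ a, hat⟩, hins.symm⟩
  rw [← hbij, Finset.card_sdiff_of_subset (Finset.subset_univ t), Finset.card_univ, Fintype.card_fin, ht]

lemma down_diag {m : ℕ} {t : Finset (Fin n)} (ht : t.card = m + 1) :
    ∑ r ∈ Finset.powersetCard m (Finset.univ : Finset (Fin n)), ee t r * ee t r
      = ((m + 1 : ℕ) : ℝ) := by
  have step : ∑ r ∈ Finset.powersetCard m (Finset.univ : Finset (Fin n)), ee t r * ee t r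
      = ∑ r ∈ Finset.powersetCard m (Finset.univ : Finset (Fin n)),
          (if r ⊆ t then (1:ℝ) else 0) := by
    refine Finset.sum_congr rfl (fun r hr => ?_)
    rw [Finset.mem_powersetCard_univ] at hr
    by_cases h : r ⊆ t
    · rw [if_pos h, ee_sq h (by omega)]
    · rw [if_neg h, ee_of_not_subset h, mul_zero]
  rw [step, Finset.sum_boole]
  congr 1
  have : (Finset.powersetCard m (Finset.univ : Finset (Fin n))).filter (fun r => r ⊆ t)
      = Finset.powersetCard m t := by
    ext r
    simp [Finset.mem_filter, Finset.mem_powersetCard_univ, Finset.mem_powersetCard]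
    tauto
  rw [this, Finset.card_powersetCard, ht, Nat.choose_succ_self_right]

lemma off_diag {m : ℕ} {t t' : Finset (Fin n)} (ht : t.card = m + 1) (ht' : t'.card = m + 1)
    (hne : t ≠ t') :
    (∑ s ∈ Finset.powersetCard (m + 2) (Finset.univ : Finset (Fin n)), ee s t * ee s t')
      + ∑ r ∈ Finset.powersetCard m (Finset.univ : Finset (Fin n)), ee t r * ee t' r = 0 := by
  have hcomm : (t \ t').card = (t' \ t).card := Finset.card_sdiff_comm (ht.trans ht'.symm)
  have h3 := Finset.card_union_add_card_inter t t'
  have h4 := Finset.card_inter_add_card_sdiff t t'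
  have hpos : 1 ≤ (t \ t').card := by
    rcases Finset.eq_empty_or_nonempty (t \ t') with h | h
    · exact absurd (Finset.eq_of_subset_of_card_le (Finset.sdiff_eq_empty_iff_subset.mp h)
        (by omega)) hne
    · exact h.card_pos
  by_cases hbig : 2 ≤ (t \ t').card
  · have h1 : ∀ s ∈ Finset.powersetCard (m + 2) (Finset.univ : Finset (Fin n)),
        ee s t * ee s t' = 0 := by
      intro s hs
      rw [Finset.mem_powersetCard_univ] at hs
      by_cases hts : t ⊆ s
      · by_cases hts' : t' ⊆ s
        · exfalso
          have hcard : (t ∪ t').card ≤ s.card :=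
            Finset.card_le_card (Finset.union_subset hts hts')
          omega
        · rw [ee_of_not_subset hts', mul_zero]
      · rw [ee_of_not_subset hts, zero_mul]
    have h2 : ∀ r ∈ Finset.powersetCard m (Finset.univ : Finset (Fin n)),
        ee t r * ee t' r = 0 := by
      intro r hr
      rw [Finset.mem_powersetCard_univ] at hr
      by_cases hrt : r ⊆ t
      · by_cases hrt' : r ⊆ t'
        · exfalso
          have hcard : r.card ≤ (t ∩ t').card :=
            Finset.card_le_card (Finset.subset_inter hrt hrt')
          omega
        · rw [ee_of_not_subset hrt', mul_zero]
      · rw [ee_of_not_subset hrt, zero_mul]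
    rw [Finset.sum_eq_zero h1, Finset.sum_eq_zero h2, add_zero]
  · have hone : (t \ t').card = 1 := by omega
    have hone' : (t' \ t).card = 1 := by omega
    obtain ⟨a, ha⟩ := Finset.card_eq_one.mp hone
    obtain ⟨a', ha'⟩ := Finset.card_eq_one.mp hone'
    have hat : a ∈ t ∧ a ∉ t' := by
      have : a ∈ t \ t' := ha ▸ Finset.mem_singleton_self a
      exact Finset.mem_sdiff.mp this
    have hat' : a' ∈ t' ∧ a' ∉ t := by
      have : a' ∈ t' \ t := ha' ▸ Finset.mem_singleton_self a'
      exact Finset.mem_sdiff.mp this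
    have haa : a ≠ a' := fun h => hat'.2 (h ▸ hat.1)
    obtain ⟨r, hr⟩ : ∃ r : Finset (Fin n), r = t ∩ t' := ⟨_, rfl⟩
    obtain ⟨s, hs⟩ : ∃ s : Finset (Fin n), s = t ∪ t' := ⟨_, rfl⟩
    have hrcard : r.card = m := by rw [hr]; omega
    have hscard : s.card = m + 2 := by rw [hs]; omega
    have hts : t = insert a r := by
      ext x
      simp only [Finset.mem_insert, hr, Finset.mem_inter]
      constructor
      · intro hx
        by_cases hx' : x ∈ t'
        · exact Or.inr ⟨hx, hx'⟩
        · left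
          have : x ∈ t \ t' := Finset.mem_sdiff.mpr ⟨hx, hx'⟩
          rw [ha] at this
          exact Finset.mem_singleton.mp this
      · rintro (rfl | ⟨hx, -⟩)
        · exact hat.1
        · exact hx
    have hts' : t' = insert a' r := by
      ext x
      simp only [Finset.mem_insert, hr, Finset.mem_inter]
      constructor
      · intro hx
        by_cases hx' : x ∈ t
        · exact Or.inr ⟨hx', hx⟩
        · left
          have : x ∈ t' \ t := Finset.mem_sdiff.mpr ⟨hx, hx'⟩
          rw [ha'] at this
          exact Finset.mem_singleton.mp this
      · rintro (rfl | ⟨-, hx⟩)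
        · exact hat'.1
        · exact hx
    have hsa' : s = insert a' t := by
      rw [hs, ← Finset.union_sdiff_self_eq_union (s := t) (t := t'), ha',
        Finset.union_comm, ← Finset.insert_eq]
    have hsa : s = insert a t' := by
      rw [hs, Finset.union_comm, ← Finset.union_sdiff_self_eq_union (s := t') (t := t), ha,
        Finset.union_comm, ← Finset.insert_eq]
    have hanr : a ∉ r := fun h => hat.2 (Finset.mem_inter.mp (hr ▸ h)).2
    have hanr' : a' ∉ r := fun h => hat'.2 (Finset.mem_inter.mp (hr ▸ h)).1
    have hup : ∑ s' ∈ Finset.powersetCard (m + 2) (Finset.univ : Finset (Fin n)),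
        ee s' t * ee s' t' = ee s t * ee s t' := by
      apply Finset.sum_eq_single_of_mem
      · rw [Finset.mem_powersetCard_univ]; exact hscard
      · intro s' hs' hne'
        rw [Finset.mem_powersetCard_univ] at hs'
        by_cases h1 : t ⊆ s'
        · by_cases h2 : t' ⊆ s'
          · exfalso
            apply hne'
            have heq : t ∪ t' = s' :=
              Finset.eq_of_subset_of_card_le (Finset.union_subset h1 h2) (by omega)
            rw [hs, ← heq]
          · rw [ee_of_not_subset h2, mul_zero]
        · rw [ee_of_not_subset h1, zero_mul]
    have hdown : ∑ r' ∈ Finset.powersetCard m (Finset.univ : Finset (Fin n)),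
        ee t r' * ee t' r' = ee t r * ee t' r := by
      apply Finset.sum_eq_single_of_mem
      · rw [Finset.mem_powersetCard_univ]; exact hrcard
      · intro r' hr' hne'
        rw [Finset.mem_powersetCard_univ] at hr'
        by_cases h1 : r' ⊆ t
        · by_cases h2 : r' ⊆ t'
          · exfalso
            apply hne'
            have heq : r' = t ∩ t' :=
              Finset.eq_of_subset_of_card_le (Finset.subset_inter h1 h2) (by omega)
            rw [hr, heq]
          · rw [ee_of_not_subset h2, mul_zero]
        · rw [ee_of_not_subset h1, zero_mul]
    rw [hup, hdown]
    have hst : s \ t = {a'} := by rw [hs, Finset.union_sdiff_left]; exact ha'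
    have hst' : s \ t' = {a} := by
      rw [hs, Finset.union_comm, Finset.union_sdiff_left]; exact ha
    have htr : t \ r = {a} := by rw [hr, Finset.sdiff_inter_self_left]; exact ha
    have htr' : t' \ r = {a'} := by
      rw [hr, Finset.inter_comm, Finset.sdiff_inter_self_left]; exact ha'
    have hts_sub : t ⊆ s := by rw [hs]; exact Finset.subset_union_left
    have hts'_sub : t' ⊆ s := by rw [hs]; exact Finset.subset_union_right
    have hrt_sub : r ⊆ t := by rw [hr]; exact Finset.inter_subset_left
    have hrt'_sub : r ⊆ t' := by rw [hr]; exact Finset.inter_subset_right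
    rw [ee_eq_sign hts_sub hst, ee_eq_sign hts'_sub hst',
      ee_eq_sign hrt_sub htr, ee_eq_sign hrt'_sub htr']
    have e1 : (s.filter (fun b => b < a')).card = (r.filter (fun b => b < a')).card
        + if a < a' then 1 else 0 := by
      rw [hsa', filter_insert_card hat'.2 a', if_neg (lt_irrefl a'), add_zero, hts,
        filter_insert_card hanr a']
    have e2 : (s.filter (fun b => b < a)).card = (r.filter (fun b => b < a)).card
        + if a' < a then 1 else 0 := by
      rw [hsa, filter_insert_card hat.2 a, if_neg (lt_irrefl a), add_zero, hts',
        filter_insert_card hanr' a]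
    have e3 : (t.filter (fun b => b < a)).card = (r.filter (fun b => b < a)).card := by
      rw [hts, filter_insert_card hanr a, if_neg (lt_irrefl a), add_zero]
    have e4 : (t'.filter (fun b => b < a')).card = (r.filter (fun b => b < a')).card := by
      rw [hts', filter_insert_card hanr' a', if_neg (lt_irrefl a'), add_zero]
    rw [e1, e2, e3, e4, ← pow_add, ← pow_add]
    have key : (r.filter (fun b => b < a')).card + (if a < a' then 1 else 0)
        + ((r.filter (fun b => b < a)).card + (if a' < a then 1 else 0))
        = ((r.filter (fun b => b < a)).card + (r.filter (fun b => b < a')).card) + 1 := by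
      rcases lt_or_gt_of_ne haa with h | h
      · rw [if_pos h, if_neg (asymm h)]; omega
      · rw [if_neg (asymm h), if_pos h]; omega
    rw [key, pow_succ]
    ring


-- matrix-level identities ---------------------------------------------------

lemma completeD_eq_ee {n k : ℕ} (s : CompleteSimplex n (k+1)) (t : CompleteSimplex n k) :
    completeD n k s t = ee s.1 t.1 := rfl

lemma sum_cs {n m : ℕ} (f : Finset (Fin n) → ℝ) :
    ∑ s : CompleteSimplex n m, f s.1
      = ∑ s ∈ Finset.powersetCard (m+1) (Finset.univ : Finset (Fin n)), f s := by
  show ∑ s : {s : Finset (Fin n) // s.card = m + 1}, f s.1 = _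
  exact (Finset.sum_subtype _ (fun _ => Finset.mem_powersetCard_univ) _).symm

lemma L_succ_eq (n k : ℕ) :
    (completeD n (k+1))ᵀ * completeD n (k+1) + completeD n k * (completeD n k)ᵀ
      = (n : ℝ) • (1 : Matrix (CompleteSimplex n (k+1)) (CompleteSimplex n (k+1)) ℝ) := by
  ext t t'
  have hcard : t.1.card = k + 2 := t.2
  have hle : k + 2 ≤ n := by
    have := Finset.card_le_card (Finset.subset_univ t.1)
    rwa [Finset.card_univ, Fintype.card_fin, hcard] at this
  simp only [Matrix.add_apply, Matrix.mul_apply, Matrix.transpose_apply, Matrix.smul_apply,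
    Matrix.one_apply, smul_eq_mul]
  have e1 : ∑ s : CompleteSimplex n (k+2), completeD n (k+1) s t * completeD n (k+1) s t'
      = ∑ s ∈ Finset.powersetCard (k+3) (Finset.univ : Finset (Fin n)),
          ee s t.1 * ee s t'.1 := sum_cs (fun s => ee s t.1 * ee s t'.1)
  have e2 : ∑ r : CompleteSimplex n k, completeD n k t r * completeD n k t' r
      = ∑ r ∈ Finset.powersetCard (k+1) (Finset.univ : Finset (Fin n)),
          ee t.1 r * ee t'.1 r := sum_cs (fun r => ee t.1 r * ee t'.1 r)
  rw [e1, e2]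
  by_cases h : t = t'
  · subst h
    rw [if_pos rfl, up_diag (m := k+1) hcard, down_diag (m := k+1) hcard]
    push_cast [hle]
    ring
  · rw [if_neg h]
    have hne : t.1 ≠ t'.1 := fun hh => h (Subtype.ext hh)
    have := off_diag (m := k+1) hcard t'.2 hne
    rw [mul_zero]
    exact this

lemma ee_empty {n : ℕ} {t : Finset (Fin n)} (h : t.card = 1) : ee t ∅ = 1 := by
  obtain ⟨x, rfl⟩ := Finset.card_eq_one.mp h
  rw [ee, if_pos (Finset.empty_subset _), Finset.sdiff_empty, Finset.sum_singleton]
  rw [Finset.filter_singleton, if_neg (lt_irrefl x), Finset.card_empty, pow_zero]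

lemma L_zero_eq (n : ℕ) :
    (completeD n 0)ᵀ * completeD n 0
      = (n : ℝ) • (1 : Matrix (CompleteSimplex n 0) (CompleteSimplex n 0) ℝ)
        - Matrix.of (fun _ _ : CompleteSimplex n 0 => (1 : ℝ)) := by
  ext t t'
  have hcard : t.1.card = 1 := t.2
  have hle : 1 ≤ n := by
    have := Finset.card_le_card (Finset.subset_univ t.1)
    rwa [Finset.card_univ, Fintype.card_fin, hcard] at this
  simp only [Matrix.sub_apply, Matrix.mul_apply, Matrix.transpose_apply, Matrix.smul_apply,
    Matrix.one_apply, smul_eq_mul, Matrix.of_apply]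
  have e1 : ∑ s : CompleteSimplex n 1, completeD n 0 s t * completeD n 0 s t'
      = ∑ s ∈ Finset.powersetCard 2 (Finset.univ : Finset (Fin n)),
          ee s t.1 * ee s t'.1 := sum_cs (fun s => ee s t.1 * ee s t'.1)
  rw [e1]
  by_cases h : t = t'
  · subst h
    rw [if_pos rfl, up_diag (m := 0) hcard]
    push_cast [hle]
    ring
  · rw [if_neg h]
    have hne : t.1 ≠ t'.1 := fun hh => h (Subtype.ext hh)
    have hoff := off_diag (m := 0) hcard t'.2 hne
    have hdown : ∑ r ∈ Finset.powersetCard 0 (Finset.univ : Finset (Fin n)),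
        ee t.1 r * ee t'.1 r = 1 := by
      rw [Finset.powersetCard_zero, Finset.sum_singleton, ee_empty hcard, ee_empty t'.2,
        mul_one]
    rw [hdown] at hoff
    linarith

-- rank and pseudo-determinant helpers ---------------------------------------

lemma matrix_rank_add_le {V : Type*} [Fintype V] (A B : Matrix V V ℝ) :
    (A + B).rank ≤ A.rank + B.rank := by
  classical
  have h : LinearMap.range (A + B).mulVecLin
      ≤ LinearMap.range A.mulVecLin ⊔ LinearMap.range B.mulVecLin := by
    rw [Matrix.mulVecLin_add]
    rintro x ⟨y, rfl⟩
    exact Submodule.add_mem_sup (LinearMap.mem_range_self _ y) (LinearMap.mem_range_self _ y)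
  exact le_trans (Submodule.finrank_mono h)
    (Submodule.finrank_add_le_finrank_add_finrank _ _)

lemma rank_lt_card_of_det_eq_zero {V : Type*} [Fintype V] [DecidableEq V] [Nonempty V]
    (A : Matrix V V ℝ) (h : A.det = 0) : A.rank < Fintype.card V := by
  rcases lt_or_eq_of_le (Matrix.rank_le_card_width A) with hlt | heq
  · exact hlt
  · exfalso
    have htop : LinearMap.range A.mulVecLin = ⊤ := by
      apply Submodule.eq_top_of_finrank_eq
      rw [Module.finrank_pi]
      exact heq
    have hsurj : Function.Surjective A.mulVec := by
      have := LinearMap.range_eq_top.mp htop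
      rwa [Matrix.coe_mulVecLin] at this
    have hunit : IsUnit A.det :=
      (Matrix.isUnit_iff_isUnit_det A).mp (Matrix.mulVec_surjective_iff_isUnit.mp hsurj)
    rw [h] at hunit
    exact hunit.ne_zero rfl

lemma pseudoDet_of_isUnit_det {V : Type*} [Fintype V] [DecidableEq V]
    (A : Matrix V V ℝ) (h : IsUnit A.det) : pseudoDet A = A.det := by
  have hr : A.rank = Fintype.card V :=
    Matrix.rank_of_isUnit A ((Matrix.isUnit_iff_isUnit_det A).mpr h)
  rw [pseudoDet, hr, Nat.sub_self, Matrix.det_eq_sign_charpoly_coeff]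

lemma card_completeSimplex (n k : ℕ) :
    Fintype.card (CompleteSimplex n k) = Nat.choose n (k + 1) := by
  have := Fintype.card_finset_len (α := Fin n) (k + 1)
  rw [Fintype.card_fin] at this
  exact this

-- the charpoly of `c • 1 - J` -----------------------------------------------

set_option synthInstance.maxHeartbeats 1000000 in
set_option maxHeartbeats 1600000 in
lemma charpoly_scalar_sub_one (V : Type*) [Fintype V] [DecidableEq V] [Nonempty V] :
    Matrix.charpoly ((Fintype.card V : ℝ) • (1 : Matrix V V ℝ)
        - Matrix.of (fun _ _ : V => (1 : ℝ)))
      = (X - C (Fintype.card V : ℝ)) ^ (Fintype.card V - 1) * X := by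
  classical
  set N := Fintype.card V with hN
  set c : ℝ := (N : ℝ) with hc
  set A : Matrix V V ℝ := c • 1 - Matrix.of (fun _ _ : V => (1 : ℝ)) with hA
  have hinj : Function.Injective ⇑(algebraMap ℝ[X] (RatFunc ℝ)) :=
    IsFractionRing.injective ℝ[X] (RatFunc ℝ)
  set φ : ℝ[X] →+* RatFunc ℝ := (algebraMap ℝ[X] (RatFunc ℝ) : ℝ[X] →+* RatFunc ℝ) with hφ
  set z : RatFunc ℝ := φ (X - C c) with hz
  have hzne : z ≠ 0 := by
    rw [hz]
    exact fun hh => Polynomial.X_sub_C_ne_zero c (hinj (hh.trans (map_zero φ).symm))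
  have hCc : φ (C c) = (N : RatFunc ℝ) := by
    have h1 : (C c : ℝ[X]) = (N : ℝ[X]) := by rw [hc]; exact map_natCast C N
    rw [h1, map_natCast]
  have key : φ.mapMatrix A.charmatrix
      = z • ((1 + Matrix.replicateCol Unit (fun _ => z⁻¹) * Matrix.replicateRow Unit (fun _ => (1 : RatFunc ℝ)) :
          Matrix V V (RatFunc ℝ))) := by
    ext i j
    simp only [RingHom.mapMatrix_apply, Matrix.map_apply, Matrix.smul_apply,
      Matrix.add_apply, Matrix.one_apply, Matrix.mul_apply, Matrix.replicateCol_apply,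
      Matrix.replicateRow_apply, Finset.univ_unique, Finset.sum_singleton, smul_eq_mul]
    by_cases hij : i = j
    · subst hij
      rw [Matrix.charmatrix_apply_eq, if_pos rfl]
      have hAii : A i i = c - 1 := by
        simp [hA, Matrix.sub_apply, Matrix.smul_apply, Matrix.one_apply]
      rw [hAii]
      have hpoly : (X - C (c - 1) : ℝ[X]) = (X - C c) + 1 := by
        rw [_root_.map_sub, _root_.map_one]; ring
      rw [hpoly, _root_.map_add, _root_.map_one, ← hz]
      field_simp
    · rw [Matrix.charmatrix_apply_ne _ _ _ hij, if_neg hij]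
      have hone : (-C (A i j) : ℝ[X]) = 1 := by
        have hAij : A i j = -1 := by
          simp [hA, Matrix.sub_apply, Matrix.smul_apply, Matrix.one_apply, hij]
        rw [hAij]; simp
      rw [hone, _root_.map_one, zero_add, mul_one, mul_inv_cancel₀ hzne]
  have hdet : φ A.charpoly = φ ((X - C c) ^ (N - 1) * X) := by
    rw [Matrix.charpoly, RingHom.map_det, key, Matrix.det_smul,
      Matrix.det_one_add_replicateCol_mul_replicateRow]
    have hdot : (fun _ : V => (1 : RatFunc ℝ)) ⬝ᵥ (fun _ : V => z⁻¹) = (N : RatFunc ℝ) * z⁻¹ := by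
      simp only [dotProduct, one_mul, Finset.sum_const, Finset.card_univ,
        nsmul_eq_mul, hN]
    rw [hdot]
    have hX : φ X = z + (N : RatFunc ℝ) := by
      rw [hz, _root_.map_sub, hCc]; ring
    obtain ⟨M, hM⟩ : ∃ M, N = M + 1 :=
      ⟨N - 1, (Nat.succ_pred_eq_of_pos Fintype.card_pos).symm⟩
    have hcard' : Fintype.card V = M + 1 := by rw [← hN, hM]
    rw [_root_.map_mul, _root_.map_pow, ← hz, hX, hM, hcard']
    simp only [Nat.add_sub_cancel]
    field_simp
    ring
  exact hinj hdet

lemma rank_scalar_sub_one (V : Type*) [Fintype V] [DecidableEq V]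
    (h2 : 2 ≤ Fintype.card V) :
    ((Fintype.card V : ℝ) • (1 : Matrix V V ℝ)
        - Matrix.of (fun _ _ : V => (1 : ℝ))).rank = Fintype.card V - 1 := by
  classical
  have : Nonempty V := Fintype.card_pos_iff.mp (by omega)
  set N := Fintype.card V with hN
  set A : Matrix V V ℝ := (N : ℝ) • 1 - Matrix.of (fun _ _ : V => (1 : ℝ)) with hA
  have hdet0 : A.det = 0 := by
    rw [Matrix.det_eq_sign_charpoly_coeff, hA, charpoly_scalar_sub_one V,
      Polynomial.coeff_zero_eq_eval_zero]
    simp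
  have hub : A.rank < N := rank_lt_card_of_det_eq_zero A hdet0
  have hJ : (Matrix.of (fun _ _ : V => (1 : ℝ)))
      = Matrix.replicateCol Unit (fun _ => (1 : ℝ)) * Matrix.replicateRow Unit (fun _ => (1 : ℝ)) := by
    ext i j
    simp [Matrix.mul_apply]
  have hrankJ : (Matrix.of (fun _ _ : V => (1 : ℝ))).rank ≤ 1 := by
    rw [hJ]
    refine le_trans (Matrix.rank_mul_le_left _ _) ?_
    simpa using Matrix.rank_le_card_width (Matrix.replicateCol Unit (fun _ => (1 : ℝ)))
  have hscal : ((N : ℝ) • (1 : Matrix V V ℝ)).rank = N := by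
    apply Matrix.rank_of_isUnit
    rw [Matrix.isUnit_iff_isUnit_det, Matrix.det_smul, Matrix.det_one, mul_one]
    exact isUnit_iff_ne_zero.mpr (pow_ne_zero _ (Nat.cast_ne_zero.mpr (by omega)))
  have hsplit : ((N : ℝ) • (1 : Matrix V V ℝ))
      = A + Matrix.of (fun _ _ : V => (1 : ℝ)) := by
    rw [hA, sub_add_cancel]
  have hlb : N ≤ A.rank + 1 := by
    calc N = ((N : ℝ) • (1 : Matrix V V ℝ)).rank := hscal.symm
      _ = (A + Matrix.of (fun _ _ : V => (1 : ℝ))).rank := by rw [hsplit]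
      _ ≤ A.rank + (Matrix.of (fun _ _ : V => (1 : ℝ))).rank := matrix_rank_add_le _ _
      _ ≤ A.rank + 1 := by omega
  omega

lemma pseudoDet_scalar_sub_one (V : Type*) [Fintype V] [DecidableEq V]
    (h2 : 2 ≤ Fintype.card V) :
    pseudoDet ((Fintype.card V : ℝ) • (1 : Matrix V V ℝ)
        - Matrix.of (fun _ _ : V => (1 : ℝ)))
      = (Fintype.card V : ℝ) ^ (Fintype.card V - 1) := by
  have : Nonempty V := Fintype.card_pos_iff.mp (by omega)
  rw [pseudoDet, rank_scalar_sub_one V h2, charpoly_scalar_sub_one V]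
  have h1 : Fintype.card V - (Fintype.card V - 1) = 1 := by omega
  rw [h1]
  have h2' := Polynomial.coeff_mul_X
    ((X - C (Fintype.card V : ℝ)) ^ (Fintype.card V - 1)) 0
  rw [show (0 + 1 : ℕ) = 1 from rfl] at h2'
  rw [h2', Polynomial.coeff_zero_eq_eval_zero]
  simp only [eval_pow, eval_sub, eval_X, eval_C, zero_sub]
  rw [← mul_pow]
  norm_num

end CayleyAux
end Aux

/-- generalized Cayley formula, Hodge blocks: for the complete
graph `K n`, the pseudo determinant of the `k`-th Hodge block
`L_k = d_kᵀ d_k + d_{k-1} d_{k-1}ᵀ` equals `n^{C(n, k+1)}` for `k ≥ 1`, while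
`Det(L_0) = n^{n-1}` for the Kirchhoff block `L_0 = d_0ᵀ d_0`. -/
theorem pseudoDet_hodgeBlock_completeGraph (n : ℕ) (hn : 2 ≤ n) :
    pseudoDet ((completeD n 0)ᵀ * completeD n 0) = (n : ℝ) ^ (n - 1) ∧
    ∀ k : ℕ,
      pseudoDet ((completeD n (k + 1))ᵀ * completeD n (k + 1) +
          completeD n k * (completeD n k)ᵀ) =
        (n : ℝ) ^ Nat.choose n (k + 2) := by
  constructor
  · have hcard : Fintype.card (CompleteSimplex n 0) = n := by
      rw [CayleyAux.card_completeSimplex, Nat.choose_one_right]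
    have hres := CayleyAux.pseudoDet_scalar_sub_one (CompleteSimplex n 0)
      (by rw [hcard]; exact hn)
    rw [hcard] at hres
    rw [CayleyAux.L_zero_eq n]
    exact hres
  · intro k
    rw [CayleyAux.L_succ_eq n k]
    have hu : IsUnit ((n : ℝ) •
        (1 : Matrix (CompleteSimplex n (k+1)) (CompleteSimplex n (k+1)) ℝ)).det := by
      rw [Matrix.det_smul, Matrix.det_one, mul_one]
      exact isUnit_iff_ne_zero.mpr (pow_ne_zero _ (Nat.cast_ne_zero.mpr (by omega)))
    rw [CayleyAux.pseudoDet_of_isUnit_det _ hu, Matrix.det_smul, Matrix.det_one, mul_one,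
      CayleyAux.card_completeSimplex]
end

section
/- Let D be the Dirac operator of a connected graph G on the full simplex basis, with the f_0 vertex coordinates listed first. If A is the matrix obtained from L = D^2 by deleting the row and column of one fixed vertex, then the product of the pseudo determinants of the diagonal blocks of the truncated operator satisfies: the truncated vertex block has Det equal to Det(L_0)/|V|, while all higher Dirac blocks D_k, k ≥ 1, are unchanged. Consequently SDet(D restricted) = SDet(D)/|V|. -/
/-!
If a symmetric matrix `A` of size `n` has rank `n - 1`, its pseudo determinant is, up to the sign
built into its definition, the coefficient of `X` in the characteristic polynomial, i.e. the sum of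
the `n` principal `(n-1)`-minors, which are the diagonal entries of `adj A`. Since
`A * adj A = det A • 1 = 0`, the columns of `adj A` lie in `ker A`. For the Kirchhoff matrix
`L₀ = d₀ᵀ d₀` of a connected graph, `ker L₀ = ker d₀` consists of the constant vectors, so the
symmetric matrix `adj L₀` is constant and each principal minor is `Det(L₀) / |V|`. The higher Dirac
blocks do not see the vertex coordinates and factor out unchanged.
-/

open Matrix

/-- `d` is a signed incidence matrix of the graph `G`: each row corresponds to
exactly one edge of `G`, carrying a `1` and a `-1` at its endpoints and `0`
elsewhere, and every edge of `G` corresponds to exactly one row. -/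
def IsSignedIncidenceMatrix {V : Type*} {E : Type*} (G : SimpleGraph V)
    (d : Matrix E V ℝ) : Prop :=
  (∀ i : E, ∃ a b, G.Adj a b ∧ d i a = 1 ∧ d i b = -1 ∧
      ∀ v, v ≠ a → v ≠ b → d i v = 0) ∧
  (∀ a b, G.Adj a b →
      ∃! i : E, (d i a = 1 ∧ d i b = -1) ∨ (d i a = -1 ∧ d i b = 1))

namespace Matrix

variable {n R : Type*} [Fintype n] [DecidableEq n]

theorem pseudoDet_eq_sum_principal_minors (A : Matrix n n ℝ) :
    pseudoDet A = ∑ s ∈ Finset.univ.powersetCard A.rank,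
      (A.submatrix (Subtype.val : s → n) Subtype.val).det := by
  rw [pseudoDet, charpoly_coeff_eq_sum_minors A _ A.rank_le_card_width, ← mul_assoc, ← pow_add,
    Even.neg_one_pow ⟨_, rfl⟩, one_mul]

theorem sum_principal_minors_card_sub_one_eq_sum_det_submatrix_succAbove [CommRing R] {m : ℕ}
    (A : Matrix (Fin (m + 1)) (Fin (m + 1)) R) :
    ∑ s ∈ Finset.univ.powersetCard m,
        (A.submatrix (Subtype.val : s → Fin (m + 1)) Subtype.val).det =
      ∑ i : Fin (m + 1), (A.submatrix i.succAbove i.succAbove).det := by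
  symm
  refine Finset.sum_bij (fun i _ => {i}ᶜ) (fun i _ => ?_) (fun i _ j _ h => compl_injective h |>
    Finset.singleton_inj.mp) (fun s hs => ?_) (fun i _ => ?_)
  · simp [Finset.mem_powersetCard, Finset.card_compl]
  · obtain ⟨a, ha⟩ := Finset.card_eq_one.mp (by
      rw [Finset.card_compl, (Finset.mem_powersetCard.mp hs).2, Fintype.card_fin]; omega :
        sᶜ.card = 1)
    exact ⟨a, Finset.mem_univ _, by rw [← ha, compl_compl]⟩
  · let e : Fin m ≃ ({i}ᶜ : Finset (Fin (m + 1))) :=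
      (finSuccAboveEquiv i).trans (Equiv.subtypeEquivRight (by simp))
    exact det_submatrix_equiv_self e (A.submatrix Subtype.val Subtype.val)

theorem adjugate_apply_self_eq_of_ker_const [CommRing R] {A : Matrix n n R} (hA : Aᵀ = A)
    (hdet : A.det = 0) (hker : ∀ x, A *ᵥ x = 0 → ∀ u v, x u = x v) (i j : n) :
    adjugate A i i = adjugate A j j := by
  have hcol : ∀ k u v, adjugate A u k = adjugate A v k := fun k =>
    hker (fun u => adjugate A u k) <| funext fun u => by
      simpa [mul_adjugate, hdet, mulVec, dotProduct, mul_apply] using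
        congrFun (congrFun (mul_adjugate A) u) k
  have hsymm : ∀ u v, adjugate A u v = adjugate A v u := fun u v => by
    rw [← transpose_apply (adjugate A), adjugate_transpose, hA]
  rw [hcol i i j, hsymm, hcol j i j]

theorem det_submatrix_succAbove_self_eq_adjugate_apply [CommRing R] {m : ℕ}
    (A : Matrix (Fin (m + 1)) (Fin (m + 1)) R) (i : Fin (m + 1)) :
    (A.submatrix i.succAbove i.succAbove).det = adjugate A i i := by
  rw [adjugate_fin_succ_eq_det_submatrix, Even.neg_one_pow ⟨_, rfl⟩, one_mul]

theorem pseudoDet_eq_mul_det_submatrix_succAbove {m : ℕ}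
    {A : Matrix (Fin (m + 1)) (Fin (m + 1)) ℝ} (hA : Aᵀ = A) (hrank : A.rank = m)
    (hker : ∀ x, A *ᵥ x = 0 → ∀ u v, x u = x v) (i : Fin (m + 1)) :
    pseudoDet A = (m + 1) * (A.submatrix i.succAbove i.succAbove).det := by
  have hdet : A.det = 0 := by
    by_contra h
    have := rank_of_det_ne_zero h
    simp only [Fintype.card_fin] at this
    omega
  rw [pseudoDet_eq_sum_principal_minors, hrank,
    sum_principal_minors_card_sub_one_eq_sum_det_submatrix_succAbove]
  simp_rw [det_submatrix_succAbove_self_eq_adjugate_apply,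
    adjugate_apply_self_eq_of_ker_const hA hdet hker _ i]
  simp

theorem mulVec_apply_eq_sub_of_row {V E : Type*} [Fintype V] {d : Matrix E V ℝ} {e : E}
    {a b : V} (hab : a ≠ b) (ha : d e a = 1) (hb : d e b = -1)
    (h0 : ∀ v, v ≠ a → v ≠ b → d e v = 0) (x : V → ℝ) :
    (d *ᵥ x) e = x a - x b := by
  classical
  rw [mulVec, dotProduct, ← Finset.sum_subset (Finset.subset_univ {a, b})
    fun v _ hv => by simp_all, Finset.sum_pair hab, ha, hb]
  ring

end Matrix

namespace IsSignedIncidenceMatrix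

variable {V E : Type*} [Fintype V] {G : SimpleGraph V} {d : Matrix E V ℝ}

theorem eq_of_adj_of_mulVec_eq_zero (hd : IsSignedIncidenceMatrix G d) {x : V → ℝ}
    (hx : d *ᵥ x = 0) {a b : V} (hab : G.Adj a b) : x a = x b := by
  obtain ⟨e, he, -⟩ := hd.2 a b hab
  obtain ⟨a', b', hab', ha', hb', h0'⟩ := hd.1 e
  have hx' : x a' = x b' := sub_eq_zero.mp <|
    (mulVec_apply_eq_sub_of_row hab'.ne ha' hb' h0' x).symm.trans (congrFun hx e)
  have hsupp : ∀ v, d e v ≠ 0 → v = a' ∨ v = b' := fun v hv => by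
    by_contra! h
    exact hv (h0' v h.1 h.2)
  have hne := hab.ne
  have ha : a = a' ∨ a = b' := hsupp a (by rcases he with ⟨h, -⟩ | ⟨h, -⟩ <;> simp [h])
  have hb : b = a' ∨ b = b' := hsupp b (by rcases he with ⟨-, h⟩ | ⟨-, h⟩ <;> simp [h])
  rcases ha with rfl | rfl <;> rcases hb with rfl | rfl
  all_goals first | exact (hne rfl).elim | linarith

theorem mulVec_eq_zero_iff (hd : IsSignedIncidenceMatrix G d) (hG : G.Connected) {x : V → ℝ} :
    d *ᵥ x = 0 ↔ ∀ u v, x u = x v := by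
  refine ⟨fun hx u v => ?_, fun hx => funext fun e => ?_⟩
  · obtain ⟨w⟩ := hG u v
    induction w with
    | nil => rfl
    | cons hadj _ ih => exact (hd.eq_of_adj_of_mulVec_eq_zero hx hadj).trans ih
  · obtain ⟨a, b, hab, ha, hb, h0⟩ := hd.1 e
    rw [mulVec_apply_eq_sub_of_row hab.ne ha hb h0, hx a b, sub_self, Pi.zero_apply]

theorem rank_eq (hd : IsSignedIncidenceMatrix G d) (hG : G.Connected) :
    d.rank = Fintype.card V - 1 := by
  have hV := hG.nonempty
  have hker : LinearMap.ker d.mulVecLin = ℝ ∙ (1 : V → ℝ) := by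
    ext x
    rw [LinearMap.mem_ker, mulVecLin_apply, hd.mulVec_eq_zero_iff hG,
      Submodule.mem_span_singleton]
    constructor
    · intro hx
      obtain ⟨v⟩ := hV
      exact ⟨x v, funext fun u => by simp [hx v u]⟩
    · rintro ⟨c, rfl⟩ u v
      rfl
  have hdim := d.mulVecLin.finrank_range_add_finrank_ker
  rw [hker, finrank_span_singleton one_ne_zero, Module.finrank_fintype_fun_eq_card] at hdim
  rw [rank]
  omega

theorem pseudoDet_transpose_mul_self [Fintype E] {m : ℕ} {G : SimpleGraph (Fin (m + 1))}
    {d : Matrix E (Fin (m + 1)) ℝ} (hd : IsSignedIncidenceMatrix G d) (hG : G.Connected)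
    (i : Fin (m + 1)) :
    pseudoDet (dᵀ * d) = (m + 1) * ((dᵀ * d).submatrix i.succAbove i.succAbove).det := by
  refine pseudoDet_eq_mul_det_submatrix_succAbove (by rw [transpose_mul, transpose_transpose])
    (by rw [rank_transpose_mul_self, hd.rank_eq hG, Fintype.card_fin, Nat.add_sub_cancel]) ?_ i
  intro x hx
  have hx : x ∈ LinearMap.ker (dᵀ * d).mulVecLin := hx
  rw [ker_mulVecLin_transpose_mul_self] at hx
  exact (hd.mulVec_eq_zero_iff hG).mp hx

end IsSignedIncidenceMatrix

theorem shaving_dirac_general (m : ℕ) (r : ℕ) (f : ℕ → ℕ)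
    (G : SimpleGraph (Fin (m + 1))) (hconn : G.Connected)
    (d0 : Matrix (Fin (f 1)) (Fin (m + 1)) ℝ)
    (hd0 : IsSignedIncidenceMatrix G d0)
    (d : ∀ k : ℕ, Matrix (Fin (f (k + 2))) (Fin (f (k + 1))) ℝ)
    (i : Fin (m + 1)) :
    Matrix.det ((d0ᵀ * d0).submatrix i.succAbove i.succAbove) =
      pseudoDet (d0ᵀ * d0) / (m + 1 : ℝ) ∧
    Matrix.det ((d0ᵀ * d0).submatrix i.succAbove i.succAbove) *
        ∏ k ∈ Finset.range (r + 1),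
          pseudoDet ((d k)ᵀ * d k) ^ ((-1 : ℤ) ^ (k + 1)) =
      (pseudoDet (d0ᵀ * d0) *
        ∏ k ∈ Finset.range (r + 1),
          pseudoDet ((d k)ᵀ * d k) ^ ((-1 : ℤ) ^ (k + 1))) / (m + 1 : ℝ) := by
  have hcofactor : Matrix.det ((d0ᵀ * d0).submatrix i.succAbove i.succAbove) =
      pseudoDet (d0ᵀ * d0) / (m + 1 : ℝ) := by
    rw [hd0.pseudoDet_transpose_mul_self hconn i, mul_div_cancel_left₀ _ (by positivity)]
  exact ⟨hcofactor, by rw [hcofactor, div_mul_eq_mul_div]⟩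

/-- shaving off one vertex: let `G` be a connected graph on the
vertices `Fin (m+1)`, whose Whitney complex has exterior derivatives
`d0 : 0-forms → 1-forms` (a signed incidence matrix of `G`) and
`d (k) : (k+1)-forms → (k+2)-forms`.  Deleting the row and the column of one
fixed vertex `i` from the Kirchhoff block `L₀ = d0ᵀ d0` produces a truncated
block whose (ordinary) determinant equals `Det(L₀)/|V|`, while all higher Dirac
blocks `D_k = d_kᵀ d_k`, `k ≥ 1`, are unchanged; consequently the super pseudo
determinant of the truncated Dirac operator equals `SDet(D)/|V|`. -/
theorem shaving_dirac (m : ℕ) (r : ℕ) (f : ℕ → ℕ)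
    (G : SimpleGraph (Fin (m + 1))) (hconn : G.Connected)
    (d0 : Matrix (Fin (f 1)) (Fin (m + 1)) ℝ)
    (hd0 : IsSignedIncidenceMatrix G d0)
    (d : ∀ k : ℕ, Matrix (Fin (f (k + 2))) (Fin (f (k + 1))) ℝ)
    (hchain0 : d 0 * d0 = 0)
    (hchain : ∀ k, d (k + 1) * d k = 0)
    (i : Fin (m + 1)) :
    Matrix.det ((d0ᵀ * d0).submatrix i.succAbove i.succAbove) =
      pseudoDet (d0ᵀ * d0) / (m + 1 : ℝ) ∧
    Matrix.det ((d0ᵀ * d0).submatrix i.succAbove i.succAbove) *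
        ∏ k ∈ Finset.range (r + 1),
          pseudoDet ((d k)ᵀ * d k) ^ ((-1 : ℤ) ^ (k + 1)) =
      (pseudoDet (d0ᵀ * d0) *
        ∏ k ∈ Finset.range (r + 1),
          pseudoDet ((d k)ᵀ * d k) ^ ((-1 : ℤ) ^ (k + 1))) / (m + 1 : ℝ) :=
  shaving_dirac_general m r f G hconn d0 hd0 d i
end
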